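/- For every x ∈ [0, 1/2], one has 1/2 − √(x(1−x)) ≥ (ln 2 − h(x))/2; equivalently, α(ξ) ≥ 1/2 for all ξ ∈ (0, ln 2], where α(ξ) = (1/ξ)(1/2 − √(h^{−1}(ln 2 − ξ)·(1 − h^{−1}(ln 2 − ξ)))). -/

import Mathlib

noncomputable section

open scoped Matrix ComplexOrder

/-- The algebra of operators on `(ℂ²)^{⊗ n}`, as `2^n × 2^n` matrices indexed by `Fin n → Fin 2`. -/
abbrev Mq (n : ℕ) := Matrix (Fin n → Fin 2) (Fin n → Fin 2) ℂ

/-- Normalized trace `τ(X) = 2^{-n} tr X`. -/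
def qTau {n : ℕ} (X : Mq n) : ℂ := ((2 : ℂ) ^ n)⁻¹ * X.trace

/-- Real part of the normalized trace. -/
def qTauR {n : ℕ} (X : Mq n) : ℝ := (qTau X).re

/-- Normalized Hilbert–Schmidt inner product `⟨X, Y⟩ = τ(X† Y)`. -/
def qInner {n : ℕ} (X Y : Mq n) : ℂ := qTau (Xᴴ * Y)

/-- `|X| = √(X† X)`. -/
def mAbs {n : ℕ} (X : Mq n) : Mq n := ((Matrix.posSemidef_conjTranspose_mul_self X).1.eigenvectorUnitary : Mq n) *
  Matrix.diagonal ((↑) ∘ (fun x : ℝ => Real.sqrt x) ∘ (Matrix.posSemidef_conjTranspose_mul_self X).1.eigenvalues) *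
  (star (Matrix.posSemidef_conjTranspose_mul_self X).1.eigenvectorUnitary : Mq n)

/-- The entropy `Ent(X) = τ(X ln X) − τ(X) ln τ(X)` (with the convention `0 ln 0 = 0`),
for positive semidefinite `X`, via the continuous functional calculus. -/
def mEnt {n : ℕ} (X : Mq n) : ℝ :=
  qTauR (cfc (fun x : ℝ => x * Real.log x) X) - qTauR X * Real.log (qTauR X)

/-- Real powers `X^p` of a positive semidefinite matrix, by functional calculus on the
support (`0 ^ p = 0` for `p ≠ 0`). -/
def mPow {n : ℕ} (X : Mq n) (p : ℝ) : Mq n := cfc (fun x : ℝ => x ^ p) X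

/-- Normalized Schatten `p`-norm `‖X‖_p = (τ(|X|^p))^{1/p}`. -/
def schatten {n : ℕ} (p : ℝ) (X : Mq n) : ℝ := qTauR (mPow (mAbs X) p) ^ (1 / p)

/-- Conditional expectation onto the `i`-th qubit being maximally mixed:
`E_i = I^{⊗(i-1)} ⊗ (τ(·) I) ⊗ I^{⊗(n-i)}`. -/
def condExpQ {n : ℕ} (i : Fin n) (X : Mq n) : Mq n :=
  Matrix.of fun a b =>
    if a i = b i then
      (2 : ℂ)⁻¹ * ∑ c : Fin 2, X (Function.update a i c) (Function.update b i c)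
    else 0

/-- The Lindblad generator `K_n = Σ_i L̂_i`, where `L̂_i` acts as `L(X) = X − τ(X) I`
on the `i`-th tensor factor. -/
def Kq (n : ℕ) (X : Mq n) : Mq n := ∑ i : Fin n, (X - condExpQ i X)

/-- The depolarizing channel on the `i`-th qubit:
`e^{-t} X + (1 - e^{-t}) τ_i(X) ⊗ I_i`. -/
def depolStep {n : ℕ} (t : ℝ) (i : Fin n) (X : Mq n) : Mq n :=
  (Real.exp (-t) : ℂ) • X + ((1 : ℂ) - (Real.exp (-t) : ℂ)) • condExpQ i X

/-- `Ψ_t^{⊗ n}`: the `n`-fold tensor power of the qubit depolarizing channel, i.e. the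
composition over all qubits `i` of the depolarizing channel acting on the `i`-th factor. -/
def psiDep {n : ℕ} (t : ℝ) (X : Mq n) : Mq n :=
  (List.finRange n).foldr (fun i Y => depolStep t i Y) X

/-- The binary entropy function `h(s) = −s ln s − (1−s) ln(1−s)`. -/
def binEnt (s : ℝ) : ℝ := -(s * Real.log s) - (1 - s) * Real.log (1 - s)

/-- `h⁻¹ : [0, ln 2] → [0, 1/2]`, the inverse of the restriction of the binary entropy
function to `[0, 1/2]`. -/
def binEntInv (y : ℝ) : ℝ := Function.invFunOn binEnt (Set.Icc 0 (1 / 2)) y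

/-- `φ(ξ) = 1/2 − √(h⁻¹(ln 2 − ξ)(1 − h⁻¹(ln 2 − ξ)))`. -/
def phiF (ξ : ℝ) : ℝ :=
  1 / 2 - Real.sqrt (binEntInv (Real.log 2 - ξ) * (1 - binEntInv (Real.log 2 - ξ)))

/-- `α(ξ) = φ(ξ)/ξ` for `ξ ∈ (0, ln 2]`, with `α(0) = 1/2` by continuous extension. -/
def alphaF (ξ : ℝ) : ℝ := if ξ = 0 then 1 / 2 else ξ⁻¹ * phiF ξ

/-!
With `g(x) = h(x) − 2√(x(1−x))`, the inequality says `g(x) ≤ g(1/2) = ln 2 − 1` on `[0, 1/2]`.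
Indeed `g` is antitone there: writing `t = √((1−x)/x) ≥ 1`, one has
`g'(x) = 2 (log t − sinh (log t)) ≤ 0`. The bound on `α` is the same inequality at
`x = h⁻¹(ln 2 − ξ)`.
-/

open Real Set

lemma binEnt_eq_binEntropy : binEnt = binEntropy := by
  funext s
  simp only [binEnt, binEntropy_eq_negMulLog_add_negMulLog_one_sub, negMulLog]
  ring

lemma log_le_sub_inv_div_two {t : ℝ} (ht : 1 ≤ t) : log t ≤ (t - t⁻¹) / 2 := by
  rw [← sinh_log (by linarith)]
  exact self_le_sinh_iff.2 (log_nonneg ht)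

lemma hasDerivAt_sqrt_mul_one_sub {x : ℝ} (hx₀ : 0 < x) (hx₁ : x < 1) :
    HasDerivAt (fun x ↦ √(x * (1 - x))) ((1 - 2 * x) / (2 * √(x * (1 - x)))) x := by
  have hpoly : HasDerivAt (fun x ↦ x * (1 - x)) (1 - 2 * x) x :=
    ((hasDerivAt_id' x).mul ((hasDerivAt_id' x).const_sub 1)).congr_deriv (by ring)
  simpa only [div_eq_mul_one_div (1 - 2 * x)] using
    hpoly.sqrt (mul_pos hx₀ (sub_pos.2 hx₁)).ne'

lemma log_one_sub_sub_log_le {x : ℝ} (hx₀ : 0 < x) (hx : x ≤ 1 / 2) :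
    log (1 - x) - log x ≤ (1 - 2 * x) / √(x * (1 - x)) := by
  have hx' : 0 < 1 - x := by linarith
  set t := √(1 - x) / √x
  have ht : 1 ≤ t := by
    rw [le_div_iff₀ (sqrt_pos.2 hx₀), one_mul]
    exact sqrt_le_sqrt (by linarith)
  have hlog : log (1 - x) - log x = 2 * log t := by
    rw [log_div (sqrt_pos.2 hx').ne' (sqrt_pos.2 hx₀).ne', log_sqrt hx'.le, log_sqrt hx₀.le]
    ring
  have hsub : t - t⁻¹ = (1 - 2 * x) / √(x * (1 - x)) := by
    rw [inv_div, div_sub_div _ _ (sqrt_pos.2 hx₀).ne' (sqrt_pos.2 hx').ne',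
      mul_self_sqrt hx'.le, mul_self_sqrt hx₀.le, sqrt_mul hx₀.le, mul_comm √x]
    ring_nf
  linarith [log_le_sub_inv_div_two ht]

lemma antitoneOn_binEntropy_sub_two_sqrt :
    AntitoneOn (fun x ↦ binEntropy x - 2 * √(x * (1 - x))) (Icc 0 (1 / 2)) := by
  have hderiv : ∀ x ∈ Ioo (0 : ℝ) (1 / 2), HasDerivAt (fun x ↦ binEntropy x - 2 * √(x * (1 - x)))
      ((log (1 - x) - log x) - (1 - 2 * x) / √(x * (1 - x))) x := by
    rintro x ⟨hx₀, hx⟩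
    refine ((hasDerivAt_binEntropy hx₀.ne' (by linarith)).sub
      ((hasDerivAt_sqrt_mul_one_sub hx₀ (by linarith)).const_mul 2)).congr_deriv ?_
    ring
  refine antitoneOn_of_deriv_nonpos (convex_Icc _ _) (by fun_prop) ?_ ?_
  · rw [interior_Icc]
    exact fun x hx ↦ (hderiv x hx).differentiableAt.differentiableWithinAt
  · rw [interior_Icc]
    intro x hx
    rw [(hderiv x hx).deriv]
    linarith [log_one_sub_sub_log_le hx.1 hx.2.le]

lemma log_two_sub_binEntropy_le {x : ℝ} (hx : x ∈ Icc (0 : ℝ) (1 / 2)) :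
    log 2 - binEntropy x ≤ 1 - 2 * √(x * (1 - x)) := by
  have h := antitoneOn_binEntropy_sub_two_sqrt hx ⟨by norm_num, le_rfl⟩ hx.2
  have hsqrt : √((1 : ℝ) / 2 * (1 - 1 / 2)) = 1 / 2 := by
    rw [show (1 : ℝ) / 2 * (1 - 1 / 2) = (1 / 2) ^ 2 by norm_num, sqrt_sq (by norm_num)]
  simp only [one_div, binEntropy_two_inv] at h hsqrt
  linarith

lemma binEnt_binEntInv {y : ℝ} (hy : y ∈ Icc 0 (log 2)) :
    binEntInv y ∈ Icc (0 : ℝ) (1 / 2) ∧ binEnt (binEntInv y) = y := by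
  have hsurj : ∃ x ∈ Icc (0 : ℝ) (1 / 2), binEnt x = y := by
    apply intermediate_value_Icc (by norm_num) (by rw [binEnt_eq_binEntropy]; fun_prop)
    simpa [binEnt_eq_binEntropy] using hy
  exact ⟨Function.invFunOn_mem hsurj, Function.invFunOn_eq hsurj⟩

/-- `1/2 − √(x(1−x)) ≥ (ln 2 − h(x))/2` for `x ∈ [0, 1/2]`; equivalently `α(ξ) ≥ 1/2`
for `ξ ∈ (0, ln 2]`. -/
theorem alpha_ge_half :
    (∀ x ∈ Set.Icc (0 : ℝ) (1 / 2),
        (Real.log 2 - binEnt x) / 2 ≤ 1 / 2 - Real.sqrt (x * (1 - x))) ∧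
      ∀ ξ ∈ Set.Ioc (0 : ℝ) (Real.log 2), 1 / 2 ≤ alphaF ξ := by
  have key : ∀ x ∈ Icc (0 : ℝ) (1 / 2), log 2 - binEnt x ≤ 1 - 2 * √(x * (1 - x)) := by
    rw [binEnt_eq_binEntropy]
    exact fun x hx ↦ log_two_sub_binEntropy_le hx
  refine ⟨fun x hx ↦ by linarith [key x hx], ?_⟩
  rintro ξ ⟨hξ₀, hξ⟩
  obtain ⟨hmem, heq⟩ := binEnt_binEntInv (y := log 2 - ξ) ⟨by linarith, by linarith⟩
  have h := key _ hmem
  rw [heq] at h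
  rw [alphaF, if_neg hξ₀.ne', phiF, inv_mul_eq_div, le_div_iff₀ hξ₀]
  linarith

end
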